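/- arXiv:2310.02819 — 2 statements merged into one kernel-verified Lean document; each statement's English description precedes it below -/
import Mathlib

section
/- Let n ≥ 2 and K ⊆ J ⊆ [n-1]. Then X(Σ)_{K,J} equals the set of classes [x;y] ∈ X(Σ) admitting a representative (x;y) with x_i = 0 for i ∈ K, x_i ≠ 0 for i ∉ K, y_i = 0 for i ∉ J, and y_i = 1 for i ∈ J. -/
open Matrix

attribute [local instance] Classical.propDecidable

noncomputable section

namespace PetersonPaper

/-- `ℂ^{2(n-1)}` with coordinates `(x_1,…,x_{n-1}; y_1,…,y_{n-1})`. -/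
abbrev C2 (n : ℕ) := (Fin (n-1) → ℂ) × (Fin (n-1) → ℂ)

/-- The complement `ℂ^{2(n-1)} - E` of the exceptional locus: for every `i`,
`(x_i, y_i) ≠ (0,0)`. -/
def goodSet (n : ℕ) : Set (C2 n) := { p | ∀ i, p.1 i ≠ 0 ∨ p.2 i ≠ 0 }

/-- The maximal torus `T ⊆ SL_n(ℂ)` of diagonal matrices, recorded by its diagonal
entries `(t_1,…,t_n)` with `∏ t_i = 1`. -/
def TGrp (n : ℕ) : Type := { t : Fin n → ℂ // ∏ i, t i = 1 }

/-- The fundamental weight `ϖ_i(t) = t_1 t_2 ⋯ t_i` (1-based; `i : Fin (n-1)`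
encodes `i.1+1`). -/
def varpi (n : ℕ) (t : TGrp n) (i : Fin (n-1)) : ℂ :=
  ∏ k : Fin n, if (k : ℕ) ≤ (i : ℕ) then t.1 k else 1

/-- The simple root `α_i(t) = t_i t_{i+1}⁻¹` (1-based; `i : Fin (n-1)` encodes
`i.1+1`). -/
def alphaR (n : ℕ) (t : TGrp n) (i : Fin (n-1)) : ℂ :=
  t.1 ⟨i.1, by have := i.isLt; omega⟩ * (t.1 ⟨i.1 + 1, by have := i.isLt; omega⟩)⁻¹

/-- The `T`-action `t • (x; y) = (ϖ_i(t) x_i; α_i(t) y_i)`. -/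
def actT (n : ℕ) (t : TGrp n) (p : C2 n) : C2 n :=
  (fun i => varpi n t i * p.1 i, fun i => alphaR n t i * p.2 i)

/-- The orbit relation of the `T`-action on `ℂ^{2(n-1)} - E`. -/
def XRel (n : ℕ) (p q : goodSet n) : Prop := ∃ t : TGrp n, actT n t ↑p = (↑q : C2 n)

/-- The toric variety `X(Σ) = (ℂ^{2(n-1)} - E)/T`, with the quotient topology. -/
def XSig (n : ℕ) := Quot (XRel n)

noncomputable instance (n : ℕ) : TopologicalSpace (XSig n) :=
  inferInstanceAs (TopologicalSpace (Quot (XRel n)))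

/-- The class `[x; y] ∈ X(Σ)` of a point of `ℂ^{2(n-1)} - E`. -/
def XMk (n : ℕ) (p : goodSet n) : XSig n := Quot.mk (XRel n) p

/-- The torus orbit `X(Σ)_{K,J}`: classes `[x;y]` with `x_i = 0` iff `i ∈ K` and
`y_i ≠ 0` iff `i ∈ J`. -/
def XKJ (n : ℕ) (K J : Set (Fin (n-1))) : Set (XSig n) :=
  { z | ∃ p : goodSet n, XMk n p = z ∧
      (∀ i, (p : C2 n).1 i = 0 ↔ i ∈ K) ∧ (∀ i, (p : C2 n).2 i ≠ 0 ↔ i ∈ J) }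

/-- The nonnegative part `X(Σ)_{≥0}`: classes with a representative all of whose
coordinates are real and nonnegative. -/
def Xge0 (n : ℕ) : Set (XSig n) :=
  { z | ∃ p : goodSet n, XMk n p = z ∧
      ∀ i, ((p : C2 n).1 i).im = 0 ∧ 0 ≤ ((p : C2 n).1 i).re ∧
        ((p : C2 n).2 i).im = 0 ∧ 0 ≤ ((p : C2 n).2 i).re }

/-- `X(Σ)_{K,J;≥0} = X(Σ)_{K,J} ∩ X(Σ)_{≥0}`. -/
def XKJge0 (n : ℕ) (K J : Set (Fin (n-1))) : Set (XSig n) := XKJ n K J ∩ Xge0 n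


/-!
The zero pattern of `(x;y)` is `T`-invariant, since every `ϖ_i(t)` and `α_i(t)` is nonzero.
Conversely the simple roots can be prescribed independently: `α_i(t) = c_i` for any nonzero
`c_i`, so choosing `c_i = y_i⁻¹` rescales every nonzero `y_i` to `1` inside the orbit.
-/

namespace TGrp

variable {n : ℕ}

lemma val_ne_zero (t : TGrp n) (k : Fin n) : t.1 k ≠ 0 := fun h =>
  one_ne_zero (t.2 ▸ Finset.prod_eq_zero (Finset.mem_univ k) h)

end TGrp

variable {n : ℕ}

lemma varpi_ne_zero (t : TGrp n) (i : Fin (n-1)) : varpi n t i ≠ 0 :=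
  Finset.prod_ne_zero_iff.2 fun k _ => by
    split_ifs
    · exact t.val_ne_zero k
    · exact one_ne_zero

lemma alphaR_ne_zero (t : TGrp n) (i : Fin (n-1)) : alphaR n t i ≠ 0 :=
  mul_ne_zero (t.val_ne_zero _) (inv_ne_zero (t.val_ne_zero _))

lemma actT_fst_eq_zero_iff (t : TGrp n) (p : C2 n) (i : Fin (n-1)) :
    (actT n t p).1 i = 0 ↔ p.1 i = 0 :=
  mul_eq_zero_iff_left (varpi_ne_zero t i)

lemma actT_snd_eq_zero_iff (t : TGrp n) (p : C2 n) (i : Fin (n-1)) :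
    (actT n t p).2 i = 0 ↔ p.2 i = 0 :=
  mul_eq_zero_iff_left (alphaR_ne_zero t i)

lemma actT_mem_goodSet (t : TGrp n) {p : C2 n} (hp : p ∈ goodSet n) :
    actT n t p ∈ goodSet n := fun i => by
  simpa only [ne_eq, actT_fst_eq_zero_iff, actT_snd_eq_zero_iff] using hp i

def actGood (t : TGrp n) (p : goodSet n) : goodSet n :=
  ⟨actT n t p, actT_mem_goodSet t p.2⟩

lemma XMk_actGood (t : TGrp n) (p : goodSet n) : XMk n (actGood t p) = XMk n p :=
  (Quot.sound ⟨t, rfl⟩).symm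

/-- Witness: `t_k = s · ∏_{j<k} c_j⁻¹`, with `s` an `n`-th root normalising `∏ t_k = 1`. -/
lemma exists_alphaR_eq (hn : 0 < n) (c : Fin (n-1) → ℂ) (hc : ∀ i, c i ≠ 0) :
    ∃ t : TGrp n, ∀ i, alphaR n t i = c i := by
  set c' : ℕ → ℂ := fun j => if h : j < n-1 then c ⟨j, h⟩ else 1
  have hc' : ∀ j, c' j ≠ 0 := fun j => by
    simp only [c']
    split_ifs
    · exact hc _
    · exact one_ne_zero
  set u : ℕ → ℂ := fun k => ∏ j ∈ Finset.range k, (c' j)⁻¹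
  have hu : ∀ k, u k ≠ 0 := fun k =>
    Finset.prod_ne_zero_iff.2 fun j _ => inv_ne_zero (hc' j)
  have hP : ∏ k : Fin n, u k ≠ 0 := Finset.prod_ne_zero_iff.2 fun k _ => hu k
  obtain ⟨s, hs⟩ := IsAlgClosed.exists_pow_nat_eq (∏ k : Fin n, u k)⁻¹ hn
  refine ⟨⟨fun k => s * u k, ?_⟩, fun i => ?_⟩
  · rw [Finset.prod_mul_distrib, Finset.prod_const, Finset.card_univ, Fintype.card_fin, hs,
      inv_mul_cancel₀ hP]
  · have hs0 : s ≠ 0 := by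
      rintro rfl
      exact inv_ne_zero hP (by rw [← hs, zero_pow hn.ne'])
    have hsucc : u (i + 1) = u i * (c i)⁻¹ := by
      simp only [u, Finset.prod_range_succ, c', dif_pos i.isLt]
    show s * u i * (s * u (i + 1))⁻¹ = c i
    rw [hsucc]
    field_simp [hu i, hc i]

lemma exists_XMk_eq_normalized (hn : 0 < n) (p : goodSet n) :
    ∃ q : goodSet n, XMk n q = XMk n p ∧
      (∀ i, (q : C2 n).1 i = 0 ↔ (p : C2 n).1 i = 0) ∧
      (∀ i, (q : C2 n).2 i = 0 ↔ (p : C2 n).2 i = 0) ∧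
      (∀ i, (p : C2 n).2 i ≠ 0 → (q : C2 n).2 i = 1) := by
  obtain ⟨t, ht⟩ := exists_alphaR_eq hn
    (fun i => if (p : C2 n).2 i = 0 then 1 else ((p : C2 n).2 i)⁻¹) fun i => by
      split_ifs with h
      · exact one_ne_zero
      · exact inv_ne_zero h
  refine ⟨actGood t p, XMk_actGood t p, actT_fst_eq_zero_iff t p, actT_snd_eq_zero_iff t p,
    fun i hi => ?_⟩
  show alphaR n t i * (p : C2 n).2 i = 1
  rw [ht i, if_neg hi, inv_mul_cancel₀ hi]

theorem XKJ_description_general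
    (n : ℕ) (hn : 2 ≤ n) (K J : Set (Fin (n-1))) :
    XKJ n K J =
      { z : XSig n | ∃ p : goodSet n, XMk n p = z ∧
          (∀ i, i ∈ K → (p : C2 n).1 i = 0) ∧
          (∀ i, i ∉ K → (p : C2 n).1 i ≠ 0) ∧
          (∀ i, i ∉ J → (p : C2 n).2 i = 0) ∧
          (∀ i, i ∈ J → (p : C2 n).2 i = 1) } := by
  ext z
  constructor
  · rintro ⟨p, rfl, hK, hJ⟩
    obtain ⟨q, hqp, hq1, hq2, hq_one⟩ := exists_XMk_eq_normalized (by omega) p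
    refine ⟨q, hqp, fun i hi => ?_, fun i hi => ?_, fun i hi => ?_, fun i hi => ?_⟩
    · exact (hq1 i).2 ((hK i).2 hi)
    · exact fun h => hi ((hK i).1 ((hq1 i).1 h))
    · exact (hq2 i).2 (not_imp_comm.1 (hJ i).1 hi)
    · exact hq_one i ((hJ i).2 hi)
  · rintro ⟨p, rfl, hK, hnK, hnJ, hJ⟩
    refine ⟨p, rfl, fun i => ⟨fun h => ?_, hK i⟩, fun i => ⟨fun h => ?_, fun hi => ?_⟩⟩
    · exact not_imp_not.1 (hnK i) h
    · exact not_imp_comm.1 (hnJ i) h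
    · simp [hJ i hi]

/-- Lemma (strata of `X(Σ)`): for `K ⊆ J ⊆ [n-1]`, `X(Σ)_{K,J}` consists exactly of
the classes with a representative `(x;y)` with `x_i = 0` for `i ∈ K`, `x_i ≠ 0`
for `i ∉ K`, `y_i = 0` for `i ∉ J` and `y_i = 1` for `i ∈ J`. -/
theorem XKJ_description
    (n : ℕ) (hn : 2 ≤ n) (K J : Set (Fin (n-1))) (hKJ : K ⊆ J) :
    XKJ n K J =
      { z : XSig n | ∃ p : goodSet n, XMk n p = z ∧
          (∀ i, i ∈ K → (p : C2 n).1 i = 0) ∧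
          (∀ i, i ∉ K → (p : C2 n).1 i ≠ 0) ∧
          (∀ i, i ∉ J → (p : C2 n).2 i = 0) ∧
          (∀ i, i ∈ J → (p : C2 n).2 i = 1) } :=
  XKJ_description_general n hn K J

end PetersonPaper
end
end

section
/- Let n ≥ 2, J ⊆ [n-1] and i ∈ [n-1]. Then: (1) v_J ∈ F_i^+ if and only if i ∈ J; and (2) v_J ∈ F_i^- if and only if i ∉ J, where F_i^+ := conv{v_L : L ⊆ [n-1], i ∈ L} and F_i^- := conv{v_L : L ⊆ [n-1], i ∉ L}. -/
open Matrix

attribute [local instance] Classical.propDecidable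

noncomputable section

namespace PetersonPaper

/-- The natural number `c` (0-based; encoding the 1-based element `c+1`) belongs to
`J ⊆ [n-1]`. -/
def memJ (n : ℕ) (J : Set (Fin (n-1))) (c : ℕ) : Prop :=
  ∃ h : c < n - 1, (⟨c, h⟩ : Fin (n-1)) ∈ J

/-- The (0-based) first element of the maximal interval of consecutive integers of
`J` containing `i ∈ J`. -/
def compStart (n : ℕ) (J : Set (Fin (n-1))) (i : Fin (n-1)) : ℕ :=
  sInf {a : ℕ | a ≤ i.1 ∧ ∀ c : ℕ, a ≤ c → c ≤ i.1 → memJ n J c}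

/-- The (0-based) last element of the maximal interval of consecutive integers of
`J` containing `i ∈ J`. -/
def compEnd (n : ℕ) (J : Set (Fin (n-1))) (i : Fin (n-1)) : ℕ :=
  sSup {b : ℕ | b < n - 1 ∧ i.1 ≤ b ∧ ∀ c : ℕ, i.1 ≤ c → c ≤ b → memJ n J c}

/-- The vertex `v_J ∈ ℝ^{n-1}`: its `i`-th coordinate is `(i+1-a)(b+1-i)` (1-based)
if `i ∈ J` with `[a,b]` the maximal interval of `J` containing `i`, and `0`
otherwise. -/
def vJ (n : ℕ) (J : Set (Fin (n-1))) : Fin (n-1) → ℝ :=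
  fun i => if i ∈ J then
    (((i.1 + 1 - compStart n J i) * (compEnd n J i + 1 - i.1) : ℕ) : ℝ) else 0

/-- The standard inner product on `ℝ^{n-1}`. -/
def dotR (n : ℕ) (a b : Fin (n-1) → ℝ) : ℝ := ∑ i, a i * b i

/-- The standard basis vector `e_i` of `ℝ^{n-1}`. -/
def stdE (n : ℕ) (i : Fin (n-1)) : Fin (n-1) → ℝ := fun j => if j = i then 1 else 0

/-- `-α^∨_i = e_{i-1} - 2 e_i + e_{i+1}` with the convention `e_0 = e_n = 0`
(1-based; `i : Fin (n-1)` encodes `i.1+1`). -/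
def negAlphaV (n : ℕ) (i : Fin (n-1)) : Fin (n-1) → ℝ :=
  fun j => (if j.1 + 1 = i.1 then 1 else 0) - 2 * (if j = i then 1 else 0)
    + (if j.1 = i.1 + 1 then 1 else 0)

/-- The face `F_i^+ = conv{v_J : i ∈ J}`. -/
def Fplus (n : ℕ) (i : Fin (n-1)) : Set (Fin (n-1) → ℝ) :=
  convexHull ℝ { v | ∃ J : Set (Fin (n-1)), i ∈ J ∧ v = vJ n J }

/-- The face `F_i^- = conv{v_J : i ∉ J}`. -/
def Fminus (n : ℕ) (i : Fin (n-1)) : Set (Fin (n-1) → ℝ) :=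
  convexHull ℝ { v | ∃ J : Set (Fin (n-1)), i ∉ J ∧ v = vJ n J }

/-- The polytope `P_{n-1} = conv{v_J : J ⊆ [n-1]}`. -/
def Ppoly (n : ℕ) : Set (Fin (n-1) → ℝ) :=
  convexHull ℝ { v | ∃ J : Set (Fin (n-1)), v = vJ n J }

/-- The face `F_{K,J} = (⋂_{i ∈ K} F_i^+) ∩ (⋂_{i ∉ J} F_i^-)` of `P_{n-1}`
(intersecting with `P_{n-1}` itself, which encodes the convention
`F_{∅,[n-1]} = P_{n-1}` and is harmless otherwise, all faces being subsets of
`P_{n-1}`). -/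
def FKJ (n : ℕ) (K J : Set (Fin (n-1))) : Set (Fin (n-1) → ℝ) :=
  Ppoly n ∩ (⋂ i ∈ K, Fplus n i) ∩ (⋂ i ∈ (Jᶜ : Set (Fin (n-1))), Fminus n i)

/-! The `i`-th coordinate separates the two faces: it is at least `1` on every `v_L` with
`i ∈ L` and `0` on every `v_L` with `i ∉ L`, so `F_i^+ ⊆ {x | 1 ≤ x i}` and
`F_i^- ⊆ {x | x i ≤ 0}` by convexity of half-spaces. -/

section
variable {n : ℕ} {J : Set (Fin (n-1))} {i : Fin (n-1)}

lemma vJ_apply_of_notMem (h : i ∉ J) : vJ n J i = 0 := if_neg h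

lemma memJ_of_mem (h : i ∈ J) : memJ n J i.1 := ⟨i.isLt, h⟩

lemma compStart_le_of_mem (h : i ∈ J) : compStart n J i ≤ i.1 :=
  Nat.sInf_le ⟨le_rfl, fun _ hic hci => le_antisymm hci hic ▸ memJ_of_mem h⟩

lemma le_compEnd_of_mem (h : i ∈ J) : i.1 ≤ compEnd n J i :=
  le_csSup ⟨n - 1, fun _ hb => hb.1.le⟩
    ⟨i.isLt, le_rfl, fun _ hic hci => le_antisymm hci hic ▸ memJ_of_mem h⟩

lemma one_le_vJ_apply_of_mem (h : i ∈ J) : 1 ≤ vJ n J i := by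
  have hstart := compStart_le_of_mem h
  have hend := le_compEnd_of_mem h
  rw [vJ, if_pos h, Nat.one_le_cast]
  exact Nat.mul_pos (by omega) (by omega)

end

section
variable {n : ℕ} (i : Fin (n-1))

lemma Fplus_subset_one_le_apply : Fplus n i ⊆ {x | 1 ≤ x i} :=
  convexHull_min (by rintro _ ⟨L, hL, rfl⟩; exact one_le_vJ_apply_of_mem hL)
    (convex_halfSpace_ge (LinearMap.proj i).isLinear 1)

lemma Fminus_subset_apply_nonpos : Fminus n i ⊆ {x | x i ≤ 0} :=
  convexHull_min (by rintro _ ⟨L, hL, rfl⟩; exact (vJ_apply_of_notMem hL).le)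
    (convex_halfSpace_le (LinearMap.proj i).isLinear 0)

end

theorem vJ_mem_face_iff_general (n : ℕ) (J : Set (Fin (n-1))) (i : Fin (n-1)) :
    (vJ n J ∈ Fplus n i ↔ i ∈ J) ∧ (vJ n J ∈ Fminus n i ↔ i ∉ J) := by
  refine ⟨⟨fun hplus => ?_, fun hi => subset_convexHull ℝ _ ⟨J, hi, rfl⟩⟩,
    ⟨fun hminus hi => ?_, fun hi => subset_convexHull ℝ _ ⟨J, hi, rfl⟩⟩⟩
  · by_contra hi
    have h : (1 : ℝ) ≤ vJ n J i := Fplus_subset_one_le_apply i hplus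
    rw [vJ_apply_of_notMem hi] at h
    norm_num at h
  · have h : vJ n J i ≤ 0 := Fminus_subset_apply_nonpos i hminus
    linarith [one_le_vJ_apply_of_mem hi]

/-- Lemma: `v_J ∈ F_i^+` iff `i ∈ J`, and `v_J ∈ F_i^-` iff `i ∉ J`. -/
theorem vJ_mem_face_iff (n : ℕ) (hn : 2 ≤ n) (J : Set (Fin (n-1))) (i : Fin (n-1)) :
    (vJ n J ∈ Fplus n i ↔ i ∈ J) ∧ (vJ n J ∈ Fminus n i ↔ i ∉ J) :=
  vJ_mem_face_iff_general n J i

end PetersonPaper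
end
end
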